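/- The ε-visibility γ_{V,M}(ε) := (1/ε)·sup_{Ω ∈ 𝐌} min_{ρ: range(ρ)⊆V, σ: tr(σΠ_V)≤1−ε} tr(Ω(ρ − σ)) is a monotonically non-decreasing function of ε on (0,1]. -/

import Mathlib

open Matrix
open scoped ComplexOrder

namespace QSVQDH

variable {d : ℕ}

/-- Schatten 1-norm (trace norm). -/
noncomputable def trNorm (A : Matrix (Fin d) (Fin d) ℂ) : ℝ :=
  (open scoped MatrixOrder in CFC.sqrt (Aᴴ * A)).trace.re

/-- Schatten 2-norm (Hilbert–Schmidt norm). -/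
noncomputable def hsNorm (A : Matrix (Fin d) (Fin d) ℂ) : ℝ :=
  Real.sqrt ((Aᴴ * A).trace.re)

/-- Operator norm. -/
noncomputable def opNorm (A : Matrix (Fin d) (Fin d) ℂ) : ℝ :=
  ‖Matrix.toEuclideanCLM (𝕜 := ℂ) A‖

/-- Density operator: positive semidefinite with unit trace. -/
def IsDensity (ρ : Matrix (Fin d) (Fin d) ℂ) : Prop := ρ.PosSemidef ∧ ρ.trace = 1

/-- POVM element: 0 ≤ M ≤ I. -/
def IsPOVMElem (M : Matrix (Fin d) (Fin d) ℂ) : Prop := M.PosSemidef ∧ (1 - M).PosSemidef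

/-- A measurement class of binary effects: contains 0, consists of POVM elements,
is convex, and is closed under M ↦ I − M. -/
def IsMClass (Mset : Set (Matrix (Fin d) (Fin d) ℂ)) : Prop :=
  0 ∈ Mset ∧ (∀ M ∈ Mset, IsPOVMElem M) ∧ Convex ℝ Mset ∧ (∀ M ∈ Mset, 1 - M ∈ Mset)

/-- The M-seminorm ‖Δ‖_M = sup_{M ∈ Mset} (2 tr(MΔ) − tr Δ). -/
noncomputable def Mnorm (Mset : Set (Matrix (Fin d) (Fin d) ℂ))
    (Δ : Matrix (Fin d) (Fin d) ℂ) : ℝ :=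
  sSup ((fun M => 2 * (M * Δ).trace.re - Δ.trace.re) '' Mset)

/-- The ε-distinguishability ratio μ_{ρ,M}(ε). -/
noncomputable def mu (Mset : Set (Matrix (Fin d) (Fin d) ℂ))
    (ρ : Matrix (Fin d) (Fin d) ℂ) (ε : ℝ) : ℝ :=
  (1 / (2 * ε)) *
    sInf ((fun σ => Mnorm Mset (ρ - σ)) '' {σ | IsDensity σ ∧ 2 * ε ≤ trNorm (ρ - σ)})

/-- The ε-visibility γ_{V,M}(ε), where the subspace V is given by its
orthogonal projector P. -/
noncomputable def gamma (Mset : Set (Matrix (Fin d) (Fin d) ℂ))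
    (P : Matrix (Fin d) (Fin d) ℂ) (ε : ℝ) : ℝ :=
  (1 / ε) * sSup ((fun Ω =>
      sInf ((fun p : Matrix (Fin d) (Fin d) ℂ × Matrix (Fin d) (Fin d) ℂ =>
          (Ω * (p.1 - p.2)).trace.re) ''
        {p | IsDensity p.1 ∧ P * p.1 = p.1 ∧ IsDensity p.2 ∧ (p.2 * P).trace.re ≤ 1 - ε}))
    '' Mset)

/-- The ε-visibility in its minimax (minimum) form. -/
noncomputable def gammaMin (Mset : Set (Matrix (Fin d) (Fin d) ℂ))
    (P : Matrix (Fin d) (Fin d) ℂ) (ε : ℝ) : ℝ :=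
  sInf ((fun p : Matrix (Fin d) (Fin d) ℂ × Matrix (Fin d) (Fin d) ℂ =>
      (1 / (2 * ε)) * Mnorm Mset (p.1 - p.2)) ''
    {p | IsDensity p.1 ∧ P * p.1 = p.1 ∧ IsDensity p.2 ∧ (p.2 * P).trace.re ≤ 1 - ε})

/-- μ_{ρ,M}(1), defined through perfectly distinguishable (orthogonal) counterparts. -/
noncomputable def muone (Mset : Set (Matrix (Fin d) (Fin d) ℂ))
    (ρ : Matrix (Fin d) (Fin d) ℂ) : ℝ :=
  (1 / 2) * sInf ((fun σ => Mnorm Mset (ρ - σ)) '' {σ | IsDensity σ ∧ (ρ * σ).trace = 0})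

/-- The distinguishability ratio μ̂_{ρ,M}. -/
noncomputable def muhat (Mset : Set (Matrix (Fin d) (Fin d) ℂ))
    (ρ : Matrix (Fin d) (Fin d) ℂ) : ℝ :=
  sInf ((fun σ => Mnorm Mset (ρ - σ) / trNorm (ρ - σ)) '' {σ | IsDensity σ ∧ σ ≠ ρ})

/-! Mixing `σ` with `ρ`, i.e. replacing it by `(1 - t) • ρ + t • σ` with `t = ε / ε'`, turns a
pair admissible at `ε'` into one admissible at `ε` and scales every bias `tr(Ω(ρ - σ))` by `t`.
So each inner minimum at `ε` is at most `t` times the one at `ε'`, and dividing by `ε = t ε'`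
gives the monotonicity. -/

theorem _root_.Matrix.PosSemidef.trace_mul_nonneg {n 𝕜 : Type*} [Fintype n] [DecidableEq n]
    [RCLike 𝕜] {A B : Matrix n n 𝕜} (hA : A.PosSemidef) (hB : B.PosSemidef) :
    0 ≤ (A * B).trace := by
  obtain ⟨D, rfl⟩ : ∃ D : Matrix n n 𝕜, B = star D * D := by
    open scoped MatrixOrder in exact CStarAlgebra.nonneg_iff_eq_star_mul_self.mp hB.nonneg
  rw [← Matrix.mul_assoc, trace_mul_comm, ← Matrix.mul_assoc]
  exact (hA.mul_mul_conjTranspose_same D).trace_nonneg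

theorem IsPOVMElem.trace_mul_re_mem_Icc {Ω ρ : Matrix (Fin d) (Fin d) ℂ} (hΩ : IsPOVMElem Ω)
    (hρ : IsDensity ρ) : (Ω * ρ).trace.re ∈ Set.Icc 0 1 := by
  have hlow := (Complex.nonneg_iff.mp (PosSemidef.trace_mul_nonneg hΩ.1 hρ.1)).1
  have hup := (Complex.nonneg_iff.mp (PosSemidef.trace_mul_nonneg hΩ.2 hρ.1)).1
  rw [Matrix.sub_mul, Matrix.one_mul, trace_sub, Complex.sub_re, hρ.2, Complex.one_re] at hup
  exact ⟨hlow, by linarith⟩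

theorem exists_isDensity_mul_eq_self {Q : Matrix (Fin d) (Fin d) ℂ} (hQ : Q * Q = Q)
    (hQ0 : Q ≠ 0) : ∃ ρ : Matrix (Fin d) (Fin d) ℂ, IsDensity ρ ∧ Q * ρ = ρ := by
  have hpsd := posSemidef_self_mul_conjTranspose Q
  have htr : (Q * Qᴴ).trace ≠ 0 := trace_mul_conjTranspose_self_eq_zero_iff.not.mpr hQ0
  refine ⟨(Q * Qᴴ).trace⁻¹ • (Q * Qᴴ), ⟨hpsd.smul (inv_nonneg_of_nonneg hpsd.trace_nonneg), ?_⟩, ?_⟩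
  · rw [trace_smul, smul_eq_mul, inv_mul_cancel₀ htr]
  · rw [Matrix.mul_smul, ← Matrix.mul_assoc, hQ]

def visibilityPairs (P : Matrix (Fin d) (Fin d) ℂ) (ε : ℝ) :
    Set (Matrix (Fin d) (Fin d) ℂ × Matrix (Fin d) (Fin d) ℂ) :=
  {p | IsDensity p.1 ∧ P * p.1 = p.1 ∧ IsDensity p.2 ∧ (p.2 * P).trace.re ≤ 1 - ε}

noncomputable def bias (Ω : Matrix (Fin d) (Fin d) ℂ)
    (p : Matrix (Fin d) (Fin d) ℂ × Matrix (Fin d) (Fin d) ℂ) : ℝ :=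
  (Ω * (p.1 - p.2)).trace.re

noncomputable def minBias (Ω P : Matrix (Fin d) (Fin d) ℂ) (ε : ℝ) : ℝ :=
  sInf (bias Ω '' visibilityPairs P ε)

theorem gamma_eq (Mset : Set (Matrix (Fin d) (Fin d) ℂ)) (P : Matrix (Fin d) (Fin d) ℂ) (ε : ℝ) :
    gamma Mset P ε = (1 / ε) * sSup ((minBias · P ε) '' Mset) :=
  rfl

theorem IsPOVMElem.abs_bias_le_one {Ω : Matrix (Fin d) (Fin d) ℂ} (hΩ : IsPOVMElem Ω)
    {p : Matrix (Fin d) (Fin d) ℂ × Matrix (Fin d) (Fin d) ℂ} (h1 : IsDensity p.1)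
    (h2 : IsDensity p.2) : |bias Ω p| ≤ 1 := by
  have ⟨h1l, h1u⟩ := hΩ.trace_mul_re_mem_Icc h1
  have ⟨h2l, h2u⟩ := hΩ.trace_mul_re_mem_Icc h2
  rw [bias, Matrix.mul_sub, trace_sub, Complex.sub_re, abs_le]
  constructor <;> linarith

theorem IsPOVMElem.bddBelow_bias_image {Ω : Matrix (Fin d) (Fin d) ℂ} (hΩ : IsPOVMElem Ω)
    (P : Matrix (Fin d) (Fin d) ℂ) (ε : ℝ) : BddBelow (bias Ω '' visibilityPairs P ε) := by
  refine ⟨-1, ?_⟩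
  rintro _ ⟨p, hp, rfl⟩
  exact (abs_le.mp (hΩ.abs_bias_le_one hp.1 hp.2.2.1)).1

theorem visibilityPairs_nonempty {P : Matrix (Fin d) (Fin d) ℂ} (hP2 : P * P = P) (hP0 : P ≠ 0)
    (hP1 : P ≠ 1) {ε : ℝ} (hε : ε ≤ 1) : (visibilityPairs P ε).Nonempty := by
  obtain ⟨ρ, hρ, hPρ⟩ := exists_isDensity_mul_eq_self hP2 hP0
  obtain ⟨σ, hσ, hQσ⟩ := exists_isDensity_mul_eq_self (Q := 1 - P)
    (by simp [sub_mul, mul_sub, hP2]) (sub_ne_zero.mpr hP1.symm)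
  have hPσ : P * σ = 0 := by rw [← hQσ, ← Matrix.mul_assoc, mul_sub, hP2]; simp
  refine ⟨(ρ, σ), hρ, hPρ, hσ, ?_⟩
  rw [trace_mul_comm, hPσ]
  simpa using hε

theorem mix_mem_visibilityPairs {P : Matrix (Fin d) (Fin d) ℂ} {ε t : ℝ}
    {p : Matrix (Fin d) (Fin d) ℂ × Matrix (Fin d) (Fin d) ℂ} (hp : p ∈ visibilityPairs P ε)
    (ht0 : 0 ≤ t) (ht1 : t ≤ 1) :
    (p.1, (1 - t) • p.1 + t • p.2) ∈ visibilityPairs P (t * ε) := by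
  obtain ⟨hρ, hPρ, hσ, hσP⟩ := hp
  refine ⟨hρ, hPρ, ⟨(hρ.1.smul (sub_nonneg.mpr ht1)).add (hσ.1.smul ht0), ?_⟩, ?_⟩
  · simp [trace_add, trace_smul, hρ.2, hσ.2]
  · have hρP : (p.1 * P).trace.re = 1 := by rw [trace_mul_comm, hPρ, hρ.2, Complex.one_re]
    simp only [add_mul, smul_mul, trace_add, trace_smul, Complex.add_re, Complex.smul_re,
      smul_eq_mul, hρP]
    linarith [mul_le_mul_of_nonneg_left hσP ht0]

theorem bias_mix (Ω ρ σ : Matrix (Fin d) (Fin d) ℂ) (t : ℝ) :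
    bias Ω (ρ, (1 - t) • ρ + t • σ) = t * bias Ω (ρ, σ) := by
  have : ρ - ((1 - t) • ρ + t • σ) = t • (ρ - σ) := by module
  simp only [bias, this, Matrix.mul_smul, trace_smul, Complex.smul_re, smul_eq_mul]

theorem minBias_mul_le {Ω P : Matrix (Fin d) (Fin d) ℂ} (hΩ : IsPOVMElem Ω) {ε t : ℝ}
    (hne : (visibilityPairs P ε).Nonempty) (ht0 : 0 ≤ t) (ht1 : t ≤ 1) :
    minBias Ω P (t * ε) ≤ t * minBias Ω P ε := by
  have hsmul := Real.sInf_smul_of_nonneg ht0 (bias Ω '' visibilityPairs P ε)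
  rw [smul_eq_mul, ← Set.image_smul, Set.image_image] at hsmul
  rw [minBias, minBias, ← hsmul]
  refine csInf_le_csInf (hΩ.bddBelow_bias_image P _) (hne.image _) ?_
  rintro _ ⟨p, hp, rfl⟩
  exact ⟨_, mix_mem_visibilityPairs hp ht0 ht1, bias_mix Ω p.1 p.2 t⟩

theorem minBias_le_one {Ω P : Matrix (Fin d) (Fin d) ℂ} (hΩ : IsPOVMElem Ω) {ε : ℝ}
    (hne : (visibilityPairs P ε).Nonempty) : minBias Ω P ε ≤ 1 := by
  obtain ⟨p, hp⟩ := hne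
  exact csInf_le_of_le (hΩ.bddBelow_bias_image P ε) ⟨p, hp, rfl⟩
    (abs_le.mp (hΩ.abs_bias_le_one hp.1 hp.2.2.1)).2

theorem gamma_monotone_general (Mset : Set (Matrix (Fin d) (Fin d) ℂ)) (hM : IsMClass Mset)
    (P : Matrix (Fin d) (Fin d) ℂ) (hP2 : P * P = P)
    (hP0 : P ≠ 0) (hP1 : P ≠ 1) (ε ε' : ℝ) (h1 : 0 < ε) (h2 : ε ≤ ε') (h3 : ε' ≤ 1) :
    gamma Mset P ε ≤ gamma Mset P ε' := by
  have hε' : 0 < ε' := h1.trans_le h2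
  set t := ε / ε'
  have ht0 : 0 ≤ t := by positivity
  have ht1 : t ≤ 1 := (div_le_one hε').mpr h2
  have hε : ε = t * ε' := (div_mul_cancel₀ ε hε'.ne').symm
  have hne := visibilityPairs_nonempty hP2 hP0 hP1 h3
  have hbdd : BddAbove ((minBias · P ε') '' Mset) := by
    refine ⟨1, ?_⟩
    rintro _ ⟨Ω, hΩ, rfl⟩
    exact minBias_le_one (hM.2.1 Ω hΩ) hne
  have hsup : sSup ((minBias · P ε) '' Mset) ≤ t * sSup ((minBias · P ε') '' Mset) := by
    refine csSup_le ((Set.nonempty_of_mem hM.1).image _) ?_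
    rintro _ ⟨Ω, hΩ, rfl⟩
    rw [hε]
    exact (minBias_mul_le (hM.2.1 Ω hΩ) hne ht0 ht1).trans
      (mul_le_mul_of_nonneg_left (le_csSup hbdd ⟨Ω, hΩ, rfl⟩) ht0)
  rw [gamma_eq, gamma_eq]
  calc 1 / ε * sSup ((minBias · P ε) '' Mset)
      ≤ 1 / ε * (t * sSup ((minBias · P ε') '' Mset)) := by gcongr
    _ = 1 / ε' * sSup ((minBias · P ε') '' Mset) := by simp only [t]; field_simp

/-- Proposition 4: the ε-visibility γ_{V,M}(ε) is monotonically
non-decreasing on (0,1]. -/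
theorem gamma_monotone (Mset : Set (Matrix (Fin d) (Fin d) ℂ)) (hM : IsMClass Mset)
    (P : Matrix (Fin d) (Fin d) ℂ) (hP : P.IsHermitian) (hP2 : P * P = P)
    (hP0 : P ≠ 0) (hP1 : P ≠ 1) (ε ε' : ℝ) (h1 : 0 < ε) (h2 : ε ≤ ε') (h3 : ε' ≤ 1) :
    gamma Mset P ε ≤ gamma Mset P ε' :=
  gamma_monotone_general Mset hM P hP2 hP0 hP1 ε ε' h1 h2 h3

end QSVQDH
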